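/- For non-negative integers k, l, p, q with l ≤ k and r = p + q, one has binom(k,l) · [(l+p)!·(k-l+q)!]^{1+α} ≤ [(k+r)!]^{1+α} for any real α ≥ 0. -/
import Mathlib


open Real

lemma choose_le_add (k l p : ℕ) : k.choose l ≤ (k + p).choose (l + p) := by
  induction p with
  | zero => simp
  | succ n ih =>
    calc k.choose l ≤ (k + n).choose (l + n) := ih
    _ ≤ (k + n).choose (l + n) + (k + n).choose (l + n + 1) := Nat.le_add_right _ _
    _ = (k + (n+1)).choose (l + (n+1)) := by
        rw [← Nat.choose_succ_succ]
        congr 1 <;> omega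

lemma nat_key (k l p q r : ℕ) (hl : l ≤ k) (hr : r = p + q) :
    k.choose l * ((l + p).factorial * (k - l + q).factorial) ≤ (k + r).factorial := by
  have hle : l + p ≤ k + r := by omega
  have hch : k.choose l ≤ (k + r).choose (l + p) := by
    calc k.choose l ≤ (k + p).choose (l + p) := choose_le_add k l p
    _ ≤ (k + r).choose (l + p) := Nat.choose_le_choose _ (by omega)
  have hsub : k + r - (l + p) = k - l + q := by omega
  calc k.choose l * ((l + p).factorial * (k - l + q).factorial)
      ≤ (k + r).choose (l + p) * ((l + p).factorial * (k - l + q).factorial) :=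
        Nat.mul_le_mul_right _ hch
    _ = (k + r).choose (l + p) * (l + p).factorial * (k + r - (l + p)).factorial := by
        rw [hsub]; ring
    _ = (k + r).factorial := Nat.choose_mul_factorial_mul_factorial hle

theorem stmt_1 (α : ℝ) (hα : 0 ≤ α) (k l p q r : ℕ) (hl : l ≤ k) (hr : r = p + q) :
    (k.choose l : ℝ) * (((l + p).factorial * (k - l + q).factorial : ℕ) : ℝ) ^ (1 + α) ≤
      ((k + r).factorial : ℝ) ^ (1 + α) := by
  set c : ℝ := (k.choose l : ℝ) with hc
  set a : ℝ := (((l + p).factorial * (k - l + q).factorial : ℕ) : ℝ) with ha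
  have hc1 : 1 ≤ c := by
    rw [hc]; exact_mod_cast Nat.choose_pos hl
  have ha0 : 0 ≤ a := by positivity
  have hkey : c * a ≤ ((k + r).factorial : ℝ) := by
    rw [hc, ha]; exact_mod_cast nat_key k l p q r hl hr
  calc c * a ^ (1 + α) ≤ c ^ (1 + α) * a ^ (1 + α) := by
        apply mul_le_mul_of_nonneg_right _ (by positivity)
        nth_rewrite 1 [show c = c ^ (1:ℝ) by simp]
        exact Real.rpow_le_rpow_of_exponent_le hc1 (by linarith)
    _ = (c * a) ^ (1 + α) := (Real.mul_rpow (by linarith) ha0).symm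
    _ ≤ ((k + r).factorial : ℝ) ^ (1 + α) :=
        Real.rpow_le_rpow (by positivity) hkey (by linarith)
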